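/- Assume ε_i > 0 for every i ∈ M. Then at every Nash equilibrium ā of 𝒢(a_0,b), every firm sources its own product category from itself: for every ℓ ∈ L and every i ∈ M_ℓ, one has ā_{i,i} = b_{i,ℓ} (and consequently ā_{i,j} = 0 for every j ∈ M_ℓ with j ≠ i). -/

import Mathlib

/-
Fix firm `i` and delete its input column from `Ã`, giving `C` and `N = (1 - C)⁻¹`, which do not
depend on `a i`. Since `Ã(x, ā₋ᵢ)` differs from `C` in one column, a Sherman–Morrison computation
gives `vᵢ = wᵢ / (1 - (N x)ᵢ - εᵢ wᵢ)` with `w = N a₀`, so firm `i`'s payoff strictly increases with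
the linear functional `x ↦ (N x)ᵢ`. Column `i` of `C` vanishes, so `Nᵢᵢ = 1`, whereas `Nᵢⱼ < 1` for
`j ≠ i` because every firm loses the share `b_{j,0} > 0` of each unit to labour. Hence shifting any
weight `āᵢⱼ > 0` within `i`'s category onto `i` itself is a profitable deviation.
-/

noncomputable section

open Matrix Finset

/-- Strategy set S_i(b). -/
def Strat (m l : ℕ) (cat : Fin m → Fin l) (b : Fin m → Fin l → ℝ) (i : Fin m) :
    Set (Fin m → ℝ) :=
  { x | (∀ j, 0 ≤ x j) ∧
        ∀ ℓ : Fin l, ∑ j ∈ univ.filter (fun j => cat j = ℓ), x j = b i ℓ }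

/-- ε_i := 1 − b_{i,0} − Σ_ℓ b_{i,ℓ}. -/
def eps (m l : ℕ) (b0 : Fin m → ℝ) (b : Fin m → Fin l → ℝ) (i : Fin m) : ℝ :=
  1 - b0 i - ∑ ℓ, b i ℓ

/-- The matrix Ã_M: (Ã_M)_{j,i} = a_{i,j} + ε_i a_{0,j}. -/
def AtM (m l : ℕ) (a0 b0 : Fin m → ℝ) (b : Fin m → Fin l → ℝ)
    (a : Fin m → Fin m → ℝ) : Matrix (Fin m) (Fin m) ℝ :=
  Matrix.of fun j i => a i j + eps m l b0 b i * a0 j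

/-- Payoff π_i(a) = ε_i v_i(a), with v(a) = (I − Ã_M)⁻¹ a_0. -/
def payoff (m l : ℕ) (a0 b0 : Fin m → ℝ) (b : Fin m → Fin l → ℝ)
    (i : Fin m) (a : Fin m → Fin m → ℝ) : ℝ :=
  eps m l b0 b i * ((1 - AtM m l a0 b0 b a)⁻¹.mulVec a0 i)

namespace Matrix

lemma updateCol_mulVec {m n R : Type*} [Fintype n] [DecidableEq n] [CommSemiring R]
    (M : Matrix m n R) (i : n) (y : m → R) (v : n → R) :
    M.updateCol i y *ᵥ v = M.updateCol i 0 *ᵥ v + v i • y := by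
  ext k
  simp only [mulVec, dotProduct, updateCol_apply, Pi.add_apply, Pi.smul_apply, smul_eq_mul,
    Pi.zero_apply, ite_mul, zero_mul, Finset.sum_ite, Finset.filter_eq', Finset.filter_ne',
    Finset.mem_univ, if_true, Finset.sum_singleton]
  ring

lemma updateCol_zero_nonneg {m n : Type*} [DecidableEq n] {M : Matrix m n ℝ}
    (hM : ∀ j k, 0 ≤ M j k) (i : n) :
    ∀ j k, 0 ≤ M.updateCol i 0 j k := fun j k => by
  rw [updateCol_apply]
  split_ifs
  exacts [le_rfl, hM j k]

lemma sum_updateCol_zero_lt_one {m n : Type*} [Fintype m] [DecidableEq n] {M : Matrix m n ℝ}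
    (hM : ∀ k, ∑ j, M j k < 1) (i : n) :
    ∀ k, ∑ j, M.updateCol i 0 j k < 1 := fun k => by
  simp only [updateCol_apply]
  split_ifs
  exacts [by simp, hM k]

variable {n : Type*} [Fintype n] {C : Matrix n n ℝ}

lemma nonneg_of_eq_add_mulVec (hC : ∀ j k, 0 ≤ C j k) (hcol : ∀ k, ∑ j, C j k < 1)
    {c u : n → ℝ} (hc : 0 ≤ c) (hu : u = c + C *ᵥ u) : 0 ≤ u := by
  -- the negative part `p` of `u` has `p ≤ C *ᵥ p`; column sums `< 1` allow this only for `p = 0`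
  set p : n → ℝ := fun k => max (-u k) 0
  have hp0 : ∀ k, 0 ≤ p k := fun k => le_max_right _ _
  have hp : ∀ j, p j ≤ ∑ k, C j k * p k := fun j => by
    have hCp : ∑ k, C j k * -u k ≤ ∑ k, C j k * p k :=
      Finset.sum_le_sum fun k _ => mul_le_mul_of_nonneg_left (le_max_left _ _) (hC j k)
    have huj : u j = c j + ∑ k, C j k * u k := congrFun hu j
    simp only [mul_neg, Finset.sum_neg_distrib] at hCp
    have hcj : 0 ≤ c j := hc j
    exact max_le (by linarith) (Finset.sum_nonneg fun k _ => mul_nonneg (hC j k) (hp0 k))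
  have hsum : ∑ k, (1 - ∑ j, C j k) * p k ≤ 0 := by
    have := Finset.sum_le_sum fun j (_ : j ∈ univ) => hp j
    rw [Finset.sum_comm] at this
    simp only [sub_mul, one_mul, Finset.sum_sub_distrib, Finset.sum_mul]
    linarith
  have hterm_nonneg : ∀ k ∈ univ, 0 ≤ (1 - ∑ j, C j k) * p k := fun k _ =>
    mul_nonneg (sub_nonneg.2 (hcol k).le) (hp0 k)
  have hterm := (Finset.sum_eq_zero_iff_of_nonneg hterm_nonneg).1
    (le_antisymm hsum (Finset.sum_nonneg hterm_nonneg))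
  intro k
  have := (mul_eq_zero.1 (hterm k (mem_univ k))).resolve_left (sub_ne_zero.2 (hcol k).ne')
  simpa [p] using this

variable [DecidableEq n]

lemma isUnit_det_one_sub (hC : ∀ j k, 0 ≤ C j k) (hcol : ∀ k, ∑ j, C j k < 1) :
    IsUnit (1 - C).det := by
  refine isUnit_iff_ne_zero.2 fun hdet => ?_
  obtain ⟨v, hv0, hv⟩ := exists_mulVec_eq_zero_iff.2 hdet
  have hfix : ∀ w : n → ℝ, (1 - C) *ᵥ w = 0 → w = 0 + C *ᵥ w := fun w hw => by
    rw [sub_mulVec, one_mulVec, sub_eq_zero] at hw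
    rw [zero_add, ← hw]
  have hneg : (1 - C) *ᵥ -v = 0 := by rw [mulVec_neg, hv, neg_zero]
  exact hv0 (le_antisymm
    (neg_nonneg.1 (nonneg_of_eq_add_mulVec hC hcol le_rfl (hfix _ hneg)))
    (nonneg_of_eq_add_mulVec hC hcol le_rfl (hfix v hv)))

lemma inv_mulVec_eq_add (h : IsUnit (1 - C).det) (c : n → ℝ) :
    (1 - C)⁻¹ *ᵥ c = c + C *ᵥ ((1 - C)⁻¹ *ᵥ c) := by
  have := congrArg (· *ᵥ c) (mul_nonsing_inv _ h)
  simp only [← mulVec_mulVec, one_mulVec, sub_mulVec] at this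
  exact sub_eq_iff_eq_add.1 this

lemma le_inv_mulVec (hC : ∀ j k, 0 ≤ C j k) (hcol : ∀ k, ∑ j, C j k < 1) {c : n → ℝ}
    (hc : 0 ≤ c) : c ≤ (1 - C)⁻¹ *ᵥ c := by
  have hu := inv_mulVec_eq_add (isUnit_det_one_sub hC hcol) c
  have hnonneg := nonneg_of_eq_add_mulVec hC hcol hc hu
  rw [hu]
  exact le_add_of_nonneg_right fun j => Finset.sum_nonneg fun k _ => mul_nonneg (hC j k) (hnonneg k)

lemma inv_apply_self_of_col_eq_zero (h : IsUnit (1 - C).det) {i : n} (hi : ∀ k, C k i = 0) :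
    (1 - C)⁻¹ i i = 1 := by
  have hfix : (1 - C) *ᵥ Pi.single i 1 = Pi.single i (1 : ℝ) := by
    rw [sub_mulVec, one_mulVec, sub_eq_self]
    ext k; simp [hi]
  have := congrFun (congrArg ((1 - C)⁻¹ *ᵥ ·) hfix) i
  rw [mulVec_mulVec, nonsing_inv_mul _ h, one_mulVec] at this
  simpa using this.symm

lemma sum_one_sub_mulVec (u : n → ℝ) :
    ∑ k, ((1 - C) *ᵥ u) k = ∑ k, (1 - ∑ j, C j k) * u k := by
  rw [sub_mulVec, one_mulVec]
  simp only [Pi.sub_apply, Finset.sum_sub_distrib, sub_mul, one_mul, Finset.sum_mul, mulVec,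
    dotProduct]
  rw [Finset.sum_comm]

lemma inv_apply_lt_one_of_col_eq_zero (hC : ∀ j k, 0 ≤ C j k) (hcol : ∀ k, ∑ j, C j k < 1)
    {i j : n} (hi : ∀ k, C k i = 0) (hji : j ≠ i) : (1 - C)⁻¹ i j < 1 := by
  set u := (1 - C)⁻¹ *ᵥ Pi.single j 1
  have hu : (1 - C) *ᵥ u = Pi.single j 1 := by
    rw [mulVec_mulVec, mul_nonsing_inv _ (isUnit_det_one_sub hC hcol), one_mulVec]
  have hle : Pi.single j 1 ≤ u := le_inv_mulVec hC hcol (Pi.single_nonneg.2 zero_le_one)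
  have hu0 : 0 ≤ u := (Pi.single_nonneg.2 zero_le_one).trans hle
  have huj : 1 ≤ u j := by simpa using hle j
  have hterm : ∀ k ∈ univ, 0 ≤ (1 - ∑ j, C j k) * u k := fun k _ =>
    mul_nonneg (sub_nonneg.2 (hcol k).le) (hu0 k)
  -- summing `(1 - C) *ᵥ u = Pi.single j 1` weighs `u` by the column defects `1 - ∑ j, C j k`
  have htotal : (1 - ∑ k, C k i) * u i + (1 - ∑ k, C k j) * u j ≤ 1 := by
    rw [← Finset.sum_pair hji.symm (f := fun k => (1 - ∑ j, C j k) * u k)]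
    calc _ ≤ ∑ k, (1 - ∑ j, C j k) * u k :=
          Finset.sum_le_sum_of_subset_of_nonneg (subset_univ _) fun k hk _ => hterm k hk
      _ = 1 := by rw [← sum_one_sub_mulVec, hu, Finset.sum_pi_single']; simp
  have hui : u i = (1 - C)⁻¹ i j := by simp [u]
  simp only [hi, Finset.sum_const_zero, sub_zero, one_mul] at htotal
  nlinarith [sub_pos.2 (hcol j)]

-- Sherman–Morrison for the rank-one change of column `i` from `0` to `y`
lemma updateCol_inv_mulVec_apply_mul (M : Matrix n n ℝ) (i : n) (y c : n → ℝ)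
    (hA : IsUnit (1 - M.updateCol i y).det) (hC : IsUnit (1 - M.updateCol i 0).det) :
    ((1 - M.updateCol i y)⁻¹ *ᵥ c) i * (1 - ((1 - M.updateCol i 0)⁻¹ *ᵥ y) i) =
      ((1 - M.updateCol i 0)⁻¹ *ᵥ c) i := by
  set v := (1 - M.updateCol i y)⁻¹ *ᵥ c
  have hv : (1 - M.updateCol i y) *ᵥ v = c := by
    rw [mulVec_mulVec, mul_nonsing_inv _ hA, one_mulVec]
  have hCv : (1 - M.updateCol i 0) *ᵥ v = c + v i • y := by
    rw [← hv, sub_mulVec, sub_mulVec, updateCol_mulVec M i y]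
    abel
  have hv' : v = (1 - M.updateCol i 0)⁻¹ *ᵥ c + v i • ((1 - M.updateCol i 0)⁻¹ *ᵥ y) := by
    rw [← mulVec_smul, ← mulVec_add, ← hCv, mulVec_mulVec, nonsing_inv_mul _ hC, one_mulVec]
  have := congrFun hv' i
  simp only [Pi.add_apply, Pi.smul_apply, smul_eq_mul] at this
  linear_combination this

end Matrix

section Game

variable {m l : ℕ} {cat : Fin m → Fin l} {a0 b0 : Fin m → ℝ} {b : Fin m → Fin l → ℝ}

lemma sum_eq_of_mem_Strat {i : Fin m} {x : Fin m → ℝ} (hx : x ∈ Strat m l cat b i) :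
    ∑ j, x j = ∑ ℓ, b i ℓ := by
  rw [← Finset.sum_fiberwise univ cat x]
  exact Finset.sum_congr rfl fun ℓ _ => hx.2 ℓ

lemma transfer_mem_Strat {i j k : Fin m} {s : Fin m → ℝ} (hs : s ∈ Strat m l cat b i)
    (hjk : cat j = cat k) (hj : j ≠ k) :
    s + s j • (Pi.single k 1 - Pi.single j 1) ∈ Strat m l cat b i := by
  refine ⟨fun r => ?_, fun ℓ => ?_⟩
  · rcases eq_or_ne r j with rfl | hrj
    · simp [hj]
    · simpa [Pi.single_apply, hrj] using add_nonneg (hs.1 r) (by split_ifs <;> simp [hs.1 j])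
  · simp only [Pi.add_apply, Pi.smul_apply, Pi.sub_apply, smul_eq_mul, Finset.sum_add_distrib,
      ← Finset.mul_sum, Finset.sum_sub_distrib, Finset.sum_pi_single', mem_filter, mem_univ,
      true_and, hjk, sub_self, mul_zero, add_zero]
    exact hs.2 ℓ

lemma update_mem_Strat {a : Fin m → Fin m → ℝ} (ha : ∀ k, a k ∈ Strat m l cat b k) {i : Fin m}
    {x : Fin m → ℝ} (hx : x ∈ Strat m l cat b i) (k : Fin m) :
    Function.update a i x k ∈ Strat m l cat b k :=
  (Function.forall_update_iff a fun k z => z ∈ Strat m l cat b k).2 ⟨hx, fun k _ => ha k⟩ k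

lemma AtM_update (a : Fin m → Fin m → ℝ) (i : Fin m) (x : Fin m → ℝ) :
    AtM m l a0 b0 b (Function.update a i x) =
      (AtM m l a0 b0 b a).updateCol i (x + eps m l b0 b i • a0) := by
  ext j k
  rcases eq_or_ne k i with rfl | hk
  · simp [AtM]
  · simp [AtM, hk]

lemma AtM_nonneg (ha0 : ∀ j, 0 ≤ a0 j) (heps : ∀ k, 0 ≤ eps m l b0 b k)
    {a : Fin m → Fin m → ℝ} (ha : ∀ k, a k ∈ Strat m l cat b k) :
    ∀ j k, 0 ≤ AtM m l a0 b0 b a j k := fun j k =>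
  add_nonneg ((ha k).1 j) (mul_nonneg (heps k) (ha0 j))

lemma sum_AtM_col (ha0sum : ∑ j, a0 j = 1) {a : Fin m → Fin m → ℝ}
    (ha : ∀ k, a k ∈ Strat m l cat b k) (k : Fin m) :
    ∑ j, AtM m l a0 b0 b a j k = 1 - b0 k := by
  simp only [AtM, of_apply, Finset.sum_add_distrib, ← Finset.mul_sum, ha0sum, mul_one,
    sum_eq_of_mem_Strat (ha k), eps]
  ring

lemma sum_AtM_col_lt_one (ha0sum : ∑ j, a0 j = 1) (hb0 : ∀ k, 0 < b0 k)
    {a : Fin m → Fin m → ℝ} (ha : ∀ k, a k ∈ Strat m l cat b k) (k : Fin m) :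
    ∑ j, AtM m l a0 b0 b a j k < 1 := by
  linarith [sum_AtM_col (b0 := b0) ha0sum ha k, hb0 k]

lemma inv_mulVec_AtM_pos (ha0 : ∀ j, 0 < a0 j) (ha0sum : ∑ j, a0 j = 1) (hb0 : ∀ k, 0 < b0 k)
    (heps : ∀ k, 0 ≤ eps m l b0 b k) {a : Fin m → Fin m → ℝ}
    (ha : ∀ k, a k ∈ Strat m l cat b k) (k : Fin m) :
    0 < ((1 - AtM m l a0 b0 b a)⁻¹ *ᵥ a0) k :=
  (ha0 k).trans_le (le_inv_mulVec (AtM_nonneg (fun j => (ha0 j).le) heps ha)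
    (sum_AtM_col_lt_one ha0sum hb0 ha) (fun j => (ha0 j).le) k)

/-- Deleting firm `i`'s input column makes this independent of `a i`; firm `i`'s value under a
deviation `x` is then `w_i / (1 - (N x)_i - ε_i w_i)` with `w = N a₀`. -/
def leontiefInvExcept (m l : ℕ) (a0 b0 : Fin m → ℝ) (b : Fin m → Fin l → ℝ)
    (a : Fin m → Fin m → ℝ) (i : Fin m) : Matrix (Fin m) (Fin m) ℝ :=
  (1 - (AtM m l a0 b0 b a).updateCol i 0)⁻¹

lemma inv_mulVec_AtM_update_apply_mul (ha0 : ∀ j, 0 ≤ a0 j) (ha0sum : ∑ j, a0 j = 1)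
    (hb0 : ∀ k, 0 < b0 k) (heps : ∀ k, 0 ≤ eps m l b0 b k) {a : Fin m → Fin m → ℝ}
    (ha : ∀ k, a k ∈ Strat m l cat b k) {i : Fin m} {x : Fin m → ℝ}
    (hx : x ∈ Strat m l cat b i) :
    ((1 - AtM m l a0 b0 b (Function.update a i x))⁻¹ *ᵥ a0) i *
        (1 - (leontiefInvExcept m l a0 b0 b a i *ᵥ x) i -
          eps m l b0 b i * (leontiefInvExcept m l a0 b0 b a i *ᵥ a0) i) =
      (leontiefInvExcept m l a0 b0 b a i *ᵥ a0) i := by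
  have hA := isUnit_det_one_sub (AtM_nonneg ha0 heps (update_mem_Strat ha hx))
    (sum_AtM_col_lt_one ha0sum hb0 (update_mem_Strat ha hx))
  rw [AtM_update] at hA ⊢
  have := updateCol_inv_mulVec_apply_mul _ i _ a0 hA
    (isUnit_det_one_sub (updateCol_zero_nonneg (AtM_nonneg ha0 heps ha) i)
      (sum_updateCol_zero_lt_one (sum_AtM_col_lt_one ha0sum hb0 ha) i))
  rw [mulVec_add, mulVec_smul] at this
  simpa only [leontiefInvExcept, Pi.add_apply, Pi.smul_apply, smul_eq_mul, sub_add_eq_sub_sub]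
    using this

lemma payoff_update_lt_payoff_update (ha0 : ∀ j, 0 < a0 j) (ha0sum : ∑ j, a0 j = 1)
    (hb0 : ∀ k, 0 < b0 k) (heps : ∀ k, 0 < eps m l b0 b k) {a : Fin m → Fin m → ℝ}
    (ha : ∀ k, a k ∈ Strat m l cat b k) {i : Fin m} {s x : Fin m → ℝ}
    (hs : s ∈ Strat m l cat b i) (hx : x ∈ Strat m l cat b i)
    (hlt : (leontiefInvExcept m l a0 b0 b a i *ᵥ s) i <
      (leontiefInvExcept m l a0 b0 b a i *ᵥ x) i) :
    payoff m l a0 b0 b i (Function.update a i s) <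
      payoff m l a0 b0 b i (Function.update a i x) := by
  have ha0' : ∀ j, 0 ≤ a0 j := fun j => (ha0 j).le
  have heps' : ∀ k, 0 ≤ eps m l b0 b k := fun k => (heps k).le
  have hvs := inv_mulVec_AtM_pos ha0 ha0sum hb0 heps' (update_mem_Strat ha hs) i
  have hvx := inv_mulVec_AtM_pos ha0 ha0sum hb0 heps' (update_mem_Strat ha hx) i
  have hs' := inv_mulVec_AtM_update_apply_mul ha0' ha0sum hb0 heps' ha hs
  have hx' := inv_mulVec_AtM_update_apply_mul ha0' ha0sum hb0 heps' ha hx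
  have hw : 0 < (leontiefInvExcept m l a0 b0 b a i *ᵥ a0) i :=
    (ha0 i).trans_le (le_inv_mulVec (updateCol_zero_nonneg (AtM_nonneg ha0' heps' ha) i)
      (sum_updateCol_zero_lt_one (sum_AtM_col_lt_one ha0sum hb0 ha) i) ha0' i)
  have hDs := pos_of_mul_pos_right (hs' ▸ hw) hvs.le
  unfold payoff
  refine mul_lt_mul_of_pos_left ?_ (heps i)
  nlinarith

lemma payoff_lt_payoff_update_transfer (ha0 : ∀ j, 0 < a0 j) (ha0sum : ∑ j, a0 j = 1)
    (hb0 : ∀ k, 0 < b0 k) (heps : ∀ k, 0 < eps m l b0 b k) {a : Fin m → Fin m → ℝ}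
    (ha : ∀ k, a k ∈ Strat m l cat b k) {i j : Fin m} (hji : j ≠ i) (hj : cat j = cat i)
    (hpos : 0 < a i j) :
    payoff m l a0 b0 b i a <
      payoff m l a0 b0 b i
        (Function.update a i (a i + a i j • (Pi.single i 1 - Pi.single j 1))) := by
  have ha0' : ∀ j, 0 ≤ a0 j := fun j => (ha0 j).le
  have heps' : ∀ k, 0 ≤ eps m l b0 b k := fun k => (heps k).le
  have hC := updateCol_zero_nonneg (AtM_nonneg ha0' heps' ha) i
  have hcol := sum_updateCol_zero_lt_one (sum_AtM_col_lt_one ha0sum hb0 ha) i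
  have hcoli : ∀ k, (AtM m l a0 b0 b a).updateCol i 0 k i = 0 := fun k => by simp
  have hNii : leontiefInvExcept m l a0 b0 b a i i i = 1 :=
    inv_apply_self_of_col_eq_zero (isUnit_det_one_sub hC hcol) hcoli
  have hNij : leontiefInvExcept m l a0 b0 b a i i j < 1 :=
    inv_apply_lt_one_of_col_eq_zero hC hcol hcoli hji
  have := payoff_update_lt_payoff_update ha0 ha0sum hb0 heps ha (ha i)
    (transfer_mem_Strat (ha i) hj hji) ?_
  · rwa [Function.update_eq_self] at this
  · simp only [mulVec_add, mulVec_smul, mulVec_sub, mulVec_single_one, Pi.add_apply,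
      Pi.smul_apply, Pi.sub_apply, col_apply, hNii, smul_eq_mul]
    nlinarith

end Game

theorem nash_own_supply_general
    (m l : ℕ) (cat : Fin m → Fin l)
    (a0 : Fin m → ℝ) (ha0 : ∀ i, 0 < a0 i) (ha0sum : ∑ i, a0 i = 1)
    (b0 : Fin m → ℝ) (hb0 : ∀ i, 0 < b0 i)
    (b : Fin m → Fin l → ℝ)
    (heps : ∀ i, 0 < eps m l b0 b i)
    (abar : Fin m → Fin m → ℝ) (habar : ∀ j, abar j ∈ Strat m l cat b j)
    (hnash : ∀ i : Fin m, ∀ x ∈ Strat m l cat b i,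
      payoff m l a0 b0 b i (Function.update abar i x) ≤ payoff m l a0 b0 b i abar) :
    ∀ ℓ : Fin l, ∀ i : Fin m, cat i = ℓ →
      abar i i = b i ℓ ∧ ∀ j : Fin m, j ≠ i → cat j = ℓ → abar i j = 0 := by
  rintro ℓ i rfl
  have hzero : ∀ j, j ≠ i → cat j = cat i → abar i j = 0 := fun j hji hj => by
    by_contra hne
    have hpos : 0 < abar i j := ((habar i).1 j).lt_of_ne' hne
    exact (hnash i _ (transfer_mem_Strat (habar i) hj hji)).not_gt
      (payoff_lt_payoff_update_transfer ha0 ha0sum hb0 heps habar hji hj hpos)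
  refine ⟨?_, hzero⟩
  rw [← (habar i).2 (cat i), Finset.sum_eq_single_of_mem i (by simp)
    fun j hj hji => hzero j hji (mem_filter.1 hj).2]

theorem nash_own_supply
    (m l : ℕ) (cat : Fin m → Fin l) (hcat : Function.Surjective cat)
    (a0 : Fin m → ℝ) (ha0 : ∀ i, 0 < a0 i) (ha0sum : ∑ i, a0 i = 1)
    (b0 : Fin m → ℝ) (hb0 : ∀ i, 0 < b0 i)
    (b : Fin m → Fin l → ℝ) (hb : ∀ i ℓ, 0 ≤ b i ℓ)
    (hble : ∀ i, b0 i + ∑ ℓ, b i ℓ ≤ 1)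
    (heps : ∀ i, 0 < eps m l b0 b i)
    (abar : Fin m → Fin m → ℝ) (habar : ∀ j, abar j ∈ Strat m l cat b j)
    (hnash : ∀ i : Fin m, ∀ x ∈ Strat m l cat b i,
      payoff m l a0 b0 b i (Function.update abar i x) ≤ payoff m l a0 b0 b i abar) :
    ∀ ℓ : Fin l, ∀ i : Fin m, cat i = ℓ →
      abar i i = b i ℓ ∧ ∀ j : Fin m, j ≠ i → cat j = ℓ → abar i j = 0 :=
  nash_own_supply_general m l cat a0 ha0 ha0sum b0 hb0 b heps abar habar hnash

end
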